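/- Let k be an algebraically closed field of characteristic p > 0, let V be a nonzero finite-dimensional k-vector space and let F be a bijective Frobenius-semilinear endomorphism of V. Then there exists a nonzero vector v ∈ V with F(v) = v. -/

import Mathlib

/-!
Take `v ≠ 0` and let `m + 1` be the first index with `F^[m + 1] v` in the span of the
independent vectors `v, F v, …, F^[m] v`, say `F^[m + 1] v = ∑ aᵢ • F^[i] v`; injectivity of `F`
and perfectness of `k` force `a₀ ≠ 0`. A vector `w = ∑ bᵢ • F^[i] v` is fixed by `F` iff
`b₀ = a₀ t^p` and `bᵢ₊₁ = bᵢ^p + aᵢ₊₁ t^p`, where `t = bₘ`. Solving the recursion expresses `bₘ`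
as a polynomial `Bₘ(t)` of degree `p^(m+1)` with zero derivative, so `Bₘ(X) - X` is separable of
degree at least `2` and, `k` being algebraically closed, has a root `t ≠ 0`; then `w ≠ 0`.
-/

open Polynomial Finset

/-- `(cyclicPoly p a i).eval t` is the coefficient `bᵢ` of the candidate fixed vector
`∑ bᵢ • F^[i] v`, as a function of `t = bₘ`. -/
noncomputable def cyclicPoly {R : Type*} [CommRing R] (p : ℕ) (a : ℕ → R) : ℕ → R[X]
  | 0 => C (a 0) * X ^ p
  | i + 1 => cyclicPoly p a i ^ p + C (a (i + 1)) * X ^ p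

section cyclicPoly

variable {R : Type*} [CommRing R] {p : ℕ} (a : ℕ → R)

theorem natDegree_cyclicPoly [NoZeroDivisors R] (hp : 1 < p) (ha : a 0 ≠ 0) (i : ℕ) :
    (cyclicPoly p a i).natDegree = p ^ (i + 1) := by
  induction i with
  | zero => simpa [cyclicPoly] using natDegree_C_mul_X_pow p (a 0) ha
  | succ i ih =>
    have hpow : (cyclicPoly p a i ^ p).natDegree = p ^ (i + 2) := by
      rw [natDegree_pow, ih]; ring
    have hlt : (C (a (i + 1)) * X ^ p).natDegree < (cyclicPoly p a i ^ p).natDegree :=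
      calc (C (a (i + 1)) * X ^ p).natDegree ≤ p := natDegree_C_mul_X_pow_le _ _
        _ < p ^ (i + 2) := by
          simpa using Nat.pow_lt_pow_right hp (show 1 < i + 2 by omega)
        _ = _ := hpow.symm
    rw [cyclicPoly, natDegree_add_eq_left_of_natDegree_lt hlt, hpow]

theorem derivative_cyclicPoly [CharP R p] (i : ℕ) : derivative (cyclicPoly p a i) = 0 := by
  induction i with
  | zero => simp [cyclicPoly, derivative_X_pow]
  | succ i ih => simp [cyclicPoly, derivative_pow, ih]

end cyclicPoly

theorem Polynomial.exists_isRoot_ne_of_separable {K : Type*} [Field K] [IsAlgClosed K]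
    {f : K[X]} (hf : f.Separable) (hdeg : 1 < f.natDegree) (a : K) :
    ∃ t, f.IsRoot t ∧ t ≠ a := by
  classical
  have hcard : 1 < #f.roots.toFinset := by
    rwa [Multiset.toFinset_card_of_nodup (nodup_roots hf), IsAlgClosed.card_roots_eq_natDegree]
  obtain ⟨t, ht, hta⟩ := exists_mem_ne hcard a
  exact ⟨t, isRoot_of_mem_roots (Multiset.mem_toFinset.mp ht), hta⟩

theorem exists_ne_zero_eval_cyclicPoly_eq {k : Type*} [Field k] [IsAlgClosed k] {p : ℕ}
    [CharP k p] (hp : 1 < p) {a : ℕ → k} (ha : a 0 ≠ 0) (m : ℕ) :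
    ∃ t ≠ 0, (cyclicPoly p a m).eval t = t := by
  have hsep : (cyclicPoly p a m - X).Separable := by
    rw [separable_def, derivative_sub, derivative_cyclicPoly, derivative_X, zero_sub]
    exact isCoprime_one_right.neg_right
  have hdeg : 1 < (cyclicPoly p a m - X).natDegree := by
    have hB := natDegree_cyclicPoly a hp ha m
    have hlt : 1 < p ^ (m + 1) := Nat.one_lt_pow m.succ_ne_zero hp
    rwa [natDegree_sub_eq_left_of_natDegree_lt (by rwa [natDegree_X, hB]), hB]
  obtain ⟨t, ht, ht0⟩ := exists_isRoot_ne_of_separable hsep hdeg 0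
  exact ⟨t, ht0, sub_eq_zero.mp (by simpa using ht)⟩

section Cyclic

variable {k V : Type*} [Field k] [AddCommGroup V] [Module k V]

open Fin.NatCast in
theorem exists_linearIndependent_and_eq_sum [FiniteDimensional k V] {g : ℕ → V}
    (hg : g 0 ≠ 0) : ∃ m, LinearIndependent k (fun i : Fin (m + 1) => g i) ∧
      ∃ a : ℕ → k, g (m + 1) = ∑ i ∈ range (m + 1), a i • g i := by
  classical
  have hdep : ∃ n, ¬LinearIndependent k (fun i : Fin (n + 1) => g i) :=
    ⟨Module.finrank k V, fun h => by simpa using h.fintype_card_le_finrank⟩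
  obtain ⟨m, hm⟩ : ∃ m, Nat.find hdep = m + 1 :=
    Nat.exists_eq_succ_of_ne_zero fun h => Nat.find_eq_zero hdep |>.mp h <|
      linearIndependent_unique_iff (ι := Fin 1) |>.mpr hg
  have hind : LinearIndependent k (fun i : Fin (m + 1) => g i) :=
    not_not.mp (Nat.find_min hdep (by omega))
  have hmem : g (m + 1) ∈ Submodule.span k (Set.range fun i : Fin (m + 1) => g i) := by
    by_contra h
    exact hm ▸ Nat.find_spec hdep <| linearIndependent_finSucc'.mpr ⟨hind, h⟩
  obtain ⟨c, hc⟩ := Submodule.mem_span_range_iff_exists_fun k |>.mp hmem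
  refine ⟨m, hind, fun i => c (i : Fin (m + 1)), ?_⟩
  rw [← Fin.sum_univ_eq_sum_range (fun i => c (i : Fin (m + 1)) • g i)]
  simpa using hc.symm

theorem sum_range_smul_ne_zero_of_linearIndependent {n : ℕ} {g : ℕ → V}
    (hg : LinearIndependent k (fun i : Fin n => g i)) {b : ℕ → k} {j : ℕ} (hj : j < n)
    (hb : b j ≠ 0) : ∑ i ∈ range n, b i • g i ≠ 0 := by
  rw [← Fin.sum_univ_eq_sum_range (fun i => b i • g i)]
  exact fun h => hb (Fintype.linearIndependent_iff.mp hg (fun i => b i) h ⟨j, hj⟩)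

theorem coeff_zero_ne_zero_of_iterate_eq_sum {σ : k →+* k} (hσ : Function.Surjective σ)
    (F : V →ₛₗ[σ] V) (hF : Function.Injective F) {v : V} {m : ℕ}
    (hind : LinearIndependent k (fun i : Fin (m + 1) => F^[i] v)) {a : ℕ → k}
    (hrel : F^[m + 1] v = ∑ i ∈ range (m + 1), a i • F^[i] v) : a 0 ≠ 0 := by
  intro ha
  choose r hr using fun i => hσ (a (i + 1))
  have hlast : F^[m] v = ∑ i ∈ range m, r i • F^[i] v := by
    apply hF
    rw [← Function.iterate_succ_apply' F, hrel, sum_range_succ', ha, zero_smul, add_zero, map_sum]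
    simp only [map_smulₛₗ, hr, Function.iterate_succ_apply']
  refine (linearIndependent_finSucc'.mp hind).2 ?_
  refine Submodule.mem_span_range_iff_exists_fun k |>.mpr ⟨fun i => r i, ?_⟩
  simpa [Fin.init, hlast] using Fin.sum_univ_eq_sum_range (fun i => r i • F^[i] v) m

theorem map_sum_cyclicPoly_eval {p : ℕ} [ExpChar k p] (F : V →ₛₗ[frobenius k p] V) {v : V}
    {m : ℕ} {a : ℕ → k} (hrel : F^[m + 1] v = ∑ i ∈ range (m + 1), a i • F^[i] v) {t : k}
    (ht : (cyclicPoly p a m).eval t = t) :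
    F (∑ i ∈ range (m + 1), (cyclicPoly p a i).eval t • F^[i] v) =
      ∑ i ∈ range (m + 1), (cyclicPoly p a i).eval t • F^[i] v := by
  set b : ℕ → k := fun i => (cyclicPoly p a i).eval t
  have hb0 : b 0 = a 0 * t ^ p := by simp [b, cyclicPoly]
  have hb : ∀ i, b (i + 1) = b i ^ p + a (i + 1) * t ^ p := fun i => by simp [b, cyclicPoly]
  calc F (∑ i ∈ range (m + 1), b i • F^[i] v)
      = ∑ i ∈ range m, b i ^ p • F^[i + 1] v + t ^ p • F^[m + 1] v := by
        simp only [map_sum, map_smulₛₗ, frobenius_def, ← Function.iterate_succ_apply' F]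
        rw [sum_range_succ, show b m = t from ht]
    _ = ∑ i ∈ range m, (b i ^ p + a (i + 1) * t ^ p) • F^[i + 1] v + (a 0 * t ^ p) • v := by
        rw [hrel, smul_sum, sum_range_succ', ← add_assoc, ← sum_add_distrib]
        simp only [add_smul, smul_smul, mul_comm, Function.iterate_zero_apply]
    _ = ∑ i ∈ range (m + 1), b i • F^[i] v := by
        rw [sum_range_succ' _ m, hb0]
        simp [hb]

end Cyclic

theorem stmt_2 (p : ℕ) [Fact p.Prime] (k : Type*) [Field k] [CharP k p] [IsAlgClosed k]
    (V : Type*) [AddCommGroup V] [Module k V] [FiniteDimensional k V] [Nontrivial V]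
    (F : V → V) (hFbij : Function.Bijective F)
    (hFadd : ∀ x y : V, F (x + y) = F x + F y)
    (hFsmul : ∀ (c : k) (v : V), F (c • v) = c ^ p • F v) :
    ∃ v : V, v ≠ 0 ∧ F v = v := by
  let Φ : V →ₛₗ[frobenius k p] V := { toFun := F, map_add' := hFadd, map_smul' := hFsmul }
  obtain ⟨v, hv⟩ := exists_ne (0 : V)
  obtain ⟨m, hind, a, hrel⟩ := exists_linearIndependent_and_eq_sum (k := k) (g := (Φ^[·] v)) hv
  have ha : a 0 ≠ 0 :=
    coeff_zero_ne_zero_of_iterate_eq_sum (surjective_frobenius k p) Φ hFbij.injective hind hrel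
  obtain ⟨t, ht0, ht⟩ := exists_ne_zero_eval_cyclicPoly_eq (Fact.out : p.Prime).one_lt ha m
  refine ⟨_, ?_, map_sum_cyclicPoly_eval Φ hrel ht⟩
  exact sum_range_smul_ne_zero_of_linearIndependent hind m.lt_succ_self (by rwa [ht])
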